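/- Let C be a finite pure chromatic simplicial complex of dimension n colored by a set A with |A| = n+1, let B ⊆ A be a nonempty set of colors, and let X, Y be facets of C. Then X and Y are related by the equivalence relation on facets generated by the relation 'Z ∩ Z' contains a vertex whose color lies in B' if and only if there exist vertices x ∈ X and y ∈ Y with colors in B and a finite sequence of vertices x = w_0, w_1, …, w_k = y of C, all with colors in B, such that for each j either w_j = w_{j+1} or {w_j, w_{j+1}} is a face of C. (This identifies the accessibility classes underlying common knowledge of the group B with the connected components of the subcomplex of C spanned by the vertices with colors in B.) -/

import Mathlib

/-!
Facets sharing a `B`-coloured vertex are joined by a one-vertex path, and "joined by a path of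
`B`-coloured vertices" is an equivalence relation on facets: reflexive because a facet of a pure
complex of dimension `|A| - 1` carries every colour, and transitive because two `B`-coloured
vertices of one facet span an edge. Conversely, consecutive vertices of a path lie in a common
facet, so a path yields a chain of facets, each sharing a `B`-coloured vertex with the next.
-/

namespace Relation

variable {α : Type*} {Q : α → Prop} {r : α → α → Prop} {a b : α}

theorem exists_seq_iff_reflTransGen :
    (∃ (k : ℕ) (w : ℕ → α), w 0 = a ∧ w k = b ∧ (∀ j ≤ k, Q (w j)) ∧
      ∀ j < k, r (w j) (w (j + 1))) ↔
    Q a ∧ ReflTransGen (fun u v => Q u ∧ Q v ∧ r u v) a b := by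
  constructor
  · rintro ⟨k, w, rfl, rfl, hQ, hr⟩
    refine ⟨hQ 0 k.zero_le, ReflTransGen.lift w (fun _ _ h => h) _ _
      (reflTransGen_of_succ_of_le _ (fun i hi => ?_) k.zero_le)⟩
    obtain ⟨-, hik⟩ := Set.mem_Ico.mp hi
    exact ⟨hQ i hik.le, hQ (i + 1) hik, hr i hik⟩
  · rintro ⟨ha, h⟩
    induction h with
    | refl =>
      exact ⟨0, fun _ => a, rfl, rfl, fun _ _ => ha, fun _ h => (Nat.not_lt_zero _ h).elim⟩
    | @tail b c _ hbc ih =>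
      obtain ⟨k, w, h0, hk, hQ, hr⟩ := ih
      refine ⟨k + 1, fun j => if j ≤ k then w j else c, by simpa using h0, by simp, ?_, ?_⟩
      · intro j hj
        by_cases hjk : j ≤ k
        · simpa [hjk] using hQ j hjk
        · simpa [hjk] using hbc.2.1
      · intro j hj
        by_cases hjk : j + 1 ≤ k
        · simpa [hjk, show j ≤ k by omega] using hr j hjk
        · obtain rfl : j = k := by omega
          simpa [hk] using hbc.2.2

end Relation

namespace ChromaticComplex

variable {V A : Type*} {C : Set (Finset V)} {l : V → A} {B : Set A}

def IsFacet (C : Set (Finset V)) (X : Finset V) : Prop :=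
  X ∈ C ∧ ∀ Z ∈ C, X ⊆ Z → X = Z

theorem exists_isFacet_superset (hfin : C.Finite) {e : Finset V} (he : e ∈ C) :
    ∃ F, IsFacet C F ∧ e ⊆ F := by
  obtain ⟨F, heF, hF⟩ := hfin.exists_le_maximal he
  exact ⟨F, ⟨hF.prop, fun Z hZ hFZ => le_antisymm hFZ (hF.2 hZ hFZ)⟩, heF⟩

variable (C l B)

def IsColoredVertex (v : V) : Prop :=
  l v ∈ B ∧ ∃ Z ∈ C, v ∈ Z

def SharesColoredVertex (X Y : Subtype (IsFacet C)) : Prop :=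
  ∃ v, v ∈ X.1 ∧ v ∈ Y.1 ∧ l v ∈ B

variable [DecidableEq V]

/-- The 1-skeleton of the subcomplex spanned by the `B`-coloured vertices, made reflexive. -/
def ColoredAdj (u v : V) : Prop :=
  IsColoredVertex C l B u ∧ IsColoredVertex C l B v ∧ (u = v ∨ ({u, v} : Finset V) ∈ C)

instance : Std.Symm (ColoredAdj C l B) where
  symm _ _ := fun ⟨hu, hv, h⟩ => ⟨hv, hu, h.imp Eq.symm fun h => by rwa [Finset.pair_comm]⟩

def FacetsJoined (X Y : Subtype (IsFacet C)) : Prop :=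
  ∃ x ∈ X.1, ∃ y ∈ Y.1, l x ∈ B ∧ l y ∈ B ∧
    Relation.ReflTransGen (ColoredAdj C l B) x y

variable {C l B}

theorem coloredAdj_of_mem_isFacet
    (hdc : ∀ X ∈ C, ∀ Y : Finset V, Y ⊆ X → Y.Nonempty → Y ∈ C)
    {F : Finset V} (hF : IsFacet C F) {u v : V} (hu : u ∈ F) (hv : v ∈ F)
    (hub : l u ∈ B) (hvb : l v ∈ B) : ColoredAdj C l B u v :=
  ⟨⟨hub, F, hF.1, hu⟩, ⟨hvb, F, hF.1, hv⟩,
    .inr (hdc F hF.1 _ (Finset.insert_subset hu (Finset.singleton_subset_iff.2 hv))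
      (Finset.insert_nonempty _ _))⟩

theorem exists_isFacet_of_coloredAdj (hfin : C.Finite) {u v : V} (h : ColoredAdj C l B u v) :
    ∃ F, IsFacet C F ∧ u ∈ F ∧ v ∈ F := by
  obtain ⟨⟨-, Z, hZ, huZ⟩, -, rfl | huv⟩ := h
  · obtain ⟨F, hF, hZF⟩ := exists_isFacet_superset hfin hZ
    exact ⟨F, hF, hZF huZ, hZF huZ⟩
  · obtain ⟨F, hF, huvF⟩ := exists_isFacet_superset hfin huv
    exact ⟨F, hF, huvF (by simp), huvF (by simp)⟩

theorem facetsJoined_equivalence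
    (hdc : ∀ X ∈ C, ∀ Y : Finset V, Y ⊆ X → Y.Nonempty → Y ∈ C)
    (hcolored : ∀ F : Subtype (IsFacet C), ∃ v ∈ F.1, l v ∈ B) :
    Equivalence (FacetsJoined C l B) where
  refl F :=
    let ⟨v, hv, hvb⟩ := hcolored F
    ⟨v, hv, v, hv, hvb, hvb, .refl⟩
  symm := fun ⟨_, hx, _, hy, hxb, hyb, h⟩ => ⟨_, hy, _, hx, hyb, hxb, symm h⟩
  trans {_ Y _} := fun ⟨x, hx, _, hy, hxb, hyb, hxy⟩ ⟨_, hy', z, hz, hy'b, hzb, hy'z⟩ =>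
    ⟨x, hx, z, hz, hxb, hzb,
      (hxy.tail (coloredAdj_of_mem_isFacet hdc Y.2 hy hy' hyb hy'b)).trans hy'z⟩

theorem eqvGen_sharesColoredVertex_of_reflTransGen (hfin : C.Finite)
    {X Y : Subtype (IsFacet C)} {x y : V} (hx : x ∈ X.1) (hy : y ∈ Y.1) (hxb : l x ∈ B)
    (h : Relation.ReflTransGen (ColoredAdj C l B) x y) :
    Relation.EqvGen (SharesColoredVertex C l B) X Y := by
  induction h generalizing Y with
  | refl => exact .rel _ _ ⟨x, hx, hy, hxb⟩
  | @tail u v _ huv ih =>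
    obtain ⟨F, hF, huF, hvF⟩ := exists_isFacet_of_coloredAdj hfin huv
    exact (ih (Y := ⟨F, hF⟩) huF).trans _ _ _ (.rel _ _ ⟨v, hvF, hy, huv.2.1.1⟩)

theorem eqvGen_sharesColoredVertex_iff (hfin : C.Finite)
    (hdc : ∀ X ∈ C, ∀ Y : Finset V, Y ⊆ X → Y.Nonempty → Y ∈ C)
    (hcolored : ∀ F : Subtype (IsFacet C), ∃ v ∈ F.1, l v ∈ B) {X Y : Subtype (IsFacet C)} :
    Relation.EqvGen (SharesColoredVertex C l B) X Y ↔ FacetsJoined C l B X Y := by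
  refine ⟨fun h => (facetsJoined_equivalence hdc hcolored).eqvGen_iff.mp (h.mono ?_), ?_⟩
  · exact fun _ _ ⟨v, hvX, hvY, hvb⟩ => ⟨v, hvX, v, hvY, hvb, hvb, .refl⟩
  · rintro ⟨x, hx, y, hy, hxb, -, h⟩
    exact eqvGen_sharesColoredVertex_of_reflTransGen hfin hx hy hxb h

end ChromaticComplex

open ChromaticComplex in
theorem common_knowledge_classes_are_connected_components_general
    {V A : Type*} [DecidableEq V] [Fintype A] (n : ℕ)
    (hA : Fintype.card A = n + 1)
    (C : Set (Finset V)) (hfin : C.Finite)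
    (hdc : ∀ X ∈ C, ∀ Y : Finset V, Y ⊆ X → Y.Nonempty → Y ∈ C)
    (l : V → A)
    (hinj : ∀ X ∈ C, Set.InjOn l (X : Set V))
    (hpure : ∀ X : Finset V, (X ∈ C ∧ ∀ Y ∈ C, X ⊆ Y → X = Y) → X.card = n + 1)
    (B : Set A) (hB : B.Nonempty)
    (X Y : {X : Finset V // X ∈ C ∧ ∀ Z ∈ C, X ⊆ Z → X = Z}) :
    Relation.EqvGen
      (fun (Z Z' : {X : Finset V // X ∈ C ∧ ∀ Z ∈ C, X ⊆ Z → X = Z}) =>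
        ∃ v, v ∈ Z.1 ∧ v ∈ Z'.1 ∧ l v ∈ B)
      X Y ↔
    ∃ x ∈ X.1, ∃ y ∈ Y.1, l x ∈ B ∧ l y ∈ B ∧
      ∃ (k : ℕ) (w : ℕ → V),
        w 0 = x ∧ w k = y ∧
        (∀ j ≤ k, l (w j) ∈ B ∧ ∃ Z ∈ C, w j ∈ Z) ∧
        (∀ j < k, w j = w (j + 1) ∨ ({w j, w (j + 1)} : Finset V) ∈ C) := by
  obtain ⟨b, hb⟩ := hB
  have hcolored (F : Subtype (IsFacet C)) : ∃ v ∈ F.1, l v ∈ B := by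
    obtain ⟨v, hv, rfl⟩ := Finset.surjOn_of_injOn_of_card_le (t := Finset.univ) l
      (fun _ _ => Finset.mem_univ _) (hinj F.1 F.2.1)
      (by rw [Finset.card_univ, hA, hpure F.1 F.2]) (Finset.mem_univ b)
    exact ⟨v, hv, hb⟩
  refine (eqvGen_sharesColoredVertex_iff (l := l) hfin hdc hcolored).trans ?_
  unfold FacetsJoined
  refine exists_congr fun x => and_congr_right fun hx => exists_congr fun y =>
    and_congr_right fun _ => and_congr_right fun hxb => and_congr_right fun _ => ?_
  exact (Relation.exists_seq_iff_reflTransGen.trans (and_iff_right ⟨hxb, X.1, X.2.1, hx⟩)).symm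

theorem common_knowledge_classes_are_connected_components
    {V A : Type*} [DecidableEq V] [Fintype A] (n : ℕ)
    (hA : Fintype.card A = n + 1)
    (C : Set (Finset V)) (hfin : C.Finite)
    (hne : ∀ X ∈ C, X.Nonempty)
    (hdc : ∀ X ∈ C, ∀ Y : Finset V, Y ⊆ X → Y.Nonempty → Y ∈ C)
    (l : V → A)
    (hinj : ∀ X ∈ C, Set.InjOn l (X : Set V))
    (hpure : ∀ X : Finset V, (X ∈ C ∧ ∀ Y ∈ C, X ⊆ Y → X = Y) → X.card = n + 1)
    (B : Set A) (hB : B.Nonempty)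
    (X Y : {X : Finset V // X ∈ C ∧ ∀ Z ∈ C, X ⊆ Z → X = Z}) :
    Relation.EqvGen
      (fun (Z Z' : {X : Finset V // X ∈ C ∧ ∀ Z ∈ C, X ⊆ Z → X = Z}) =>
        ∃ v, v ∈ Z.1 ∧ v ∈ Z'.1 ∧ l v ∈ B)
      X Y ↔
    ∃ x ∈ X.1, ∃ y ∈ Y.1, l x ∈ B ∧ l y ∈ B ∧
      ∃ (k : ℕ) (w : ℕ → V),
        w 0 = x ∧ w k = y ∧
        (∀ j ≤ k, l (w j) ∈ B ∧ ∃ Z ∈ C, w j ∈ Z) ∧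
        (∀ j < k, w j = w (j + 1) ∨ ({w j, w (j + 1)} : Finset V) ∈ C) :=
  common_knowledge_classes_are_connected_components_general n hA C hfin hdc l hinj hpure B hB X Y
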